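/- arXiv:2407.18217 — 3 statements merged into one kernel-verified Lean document; each statement's English description precedes it below -/
import Mathlib

section
/- Let $X_j \sim \mathrm{Poisson}(\lambda_j)$, $1 \le j \le n$, be independent, $S_n = \sum_{j=1}^n X_j$ and $W_n = \sum_{j=1}^n j X_j$. Then for $1 \le k \le n$, the partial exponential Bell polynomial satisfies $B_{n,k}(1!\lambda_1, \dots, n!\lambda_n) = \frac{n! \, P(S_n = k, W_n = n)}{P(S_n = 0)}$. -/
open MeasureTheory ProbabilityTheory Real

/-! Splitting the event `{S_n = k, W_n = n}` according to the value of `(X_1, …, X_n)`,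
its probability is `∑_{c ∈ Λ_{k,n}} ∏_j e^{-λ_j} λ_j^{c_j} / c_j!`, while
`P(S_n = 0) = ∏_j e^{-λ_j}`. Dividing out the common factor `∏_j e^{-λ_j}` leaves
`∑_{c ∈ Λ_{k,n}} ∏_j λ_j^{c_j} / c_j!`, which is `B_{n,k}(1!λ_1, …, n!λ_n) / n!` because
the `j!` in the arguments cancel the `j!` in the definition. -/

/-- The partial (incomplete) exponential Bell polynomial
`B_{n,k}(u_1,…,u_n) = ∑_{Λ_{k,n}} n!/(c_1!⋯c_n!) ∏ (u_i/i!)^{c_i}`,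
with `Λ_{k,n} = {(c_1,…,c_n) : ∑ c_i = k, ∑ i c_i = n}`. -/
noncomputable def bellPartial (n k : ℕ) (u : ℕ → ℝ) : ℝ :=
  ∑ c ∈ (Fintype.piFinset fun _ : Fin n => Finset.range (n + 1)).filter
      (fun c => (∑ i, c i = k) ∧ ∑ i, (i.1 + 1) * c i = n),
    ((n.factorial : ℝ) / ∏ i, ((c i).factorial : ℝ)) *
      ∏ i, (u (i.1 + 1) / ((i.1 + 1).factorial : ℝ)) ^ c i

def bellIndex (n k : ℕ) : Finset (Fin n → ℕ) :=
  (Fintype.piFinset fun _ : Fin n => Finset.range (n + 1)).filter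
    (fun c => (∑ i, c i = k) ∧ ∑ i, (i.1 + 1) * c i = n)

/-- The bound `c i ≤ n` built into `bellIndex` is implied by `∑ (i + 1) c i = n`. -/
theorem mem_bellIndex {n k : ℕ} {c : Fin n → ℕ} :
    c ∈ bellIndex n k ↔ (∑ i, c i = k) ∧ ∑ i, (i.1 + 1) * c i = n := by
  refine ⟨fun hc => (Finset.mem_filter.1 hc).2, fun hc => Finset.mem_filter.2 ⟨?_, hc⟩⟩
  refine Fintype.mem_piFinset.2 fun j => Finset.mem_range_succ_iff.2 ?_
  calc c j ≤ (j.1 + 1) * c j := Nat.le_mul_of_pos_left _ j.1.succ_pos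
    _ ≤ ∑ i, (i.1 + 1) * c i :=
      Finset.single_le_sum (f := fun i : Fin n => (i.1 + 1) * c i) (by simp) (Finset.mem_univ j)
    _ = n := hc.2

theorem bellPartial_factorial_mul (n k : ℕ) (l : ℕ → ℝ) :
    bellPartial n k (fun j => (j.factorial : ℝ) * l j) =
      n.factorial *
        ∑ c ∈ bellIndex n k, ∏ i : Fin n, l (i.1 + 1) ^ c i / (c i).factorial := by
  rw [bellPartial, Finset.mul_sum]
  refine Finset.sum_congr rfl fun c _ => ?_
  have hcancel (m : ℕ) (x : ℝ) : (m.factorial : ℝ) * x / m.factorial = x :=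
    mul_div_cancel_left₀ x (Nat.cast_ne_zero.2 m.factorial_ne_zero)
  simp only [hcancel, Finset.prod_div_distrib]
  ring

theorem ProbabilityTheory.iIndepFun.measure_forall_eq {Ω ι : Type*} [MeasurableSpace Ω]
    {μ : Measure Ω} [Fintype ι] {β : ι → Type*} [∀ i, MeasurableSpace (β i)]
    [∀ i, MeasurableSingletonClass (β i)] {X : ∀ i, Ω → β i} (hX : iIndepFun X μ)
    (c : ∀ i, β i) : μ {ω | ∀ i, X i ω = c i} = ∏ i, μ {ω | X i ω = c i} := by
  have hfiber : {ω | ∀ i, X i ω = c i} = ⋂ i, X i ⁻¹' {c i} := by ext; simp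
  rw [hfiber, hX.meas_iInter fun i => ⟨{c i}, measurableSet_singleton _, rfl⟩]
  rfl

theorem prod_exp_neg_mul_pow_div_factorial {ι : Type*} (s : Finset ι) (a : ι → ℝ)
    (c : ι → ℕ) :
    ∏ i ∈ s, rexp (-a i) * a i ^ c i / (c i).factorial =
      (∏ i ∈ s, rexp (-a i)) * ∏ i ∈ s, a i ^ c i / (c i).factorial := by
  rw [← Finset.prod_mul_distrib]
  exact Finset.prod_congr rfl fun i _ => mul_div_assoc _ _ _

theorem bellPartial_eq_poisson_prob_general
    {Ω : Type*} [MeasurableSpace Ω] (μ : Measure Ω) [IsProbabilityMeasure μ]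
    (n : ℕ) (l : ℕ → ℝ) (hl : ∀ j, 0 < l j)
    (X : Fin n → Ω → ℕ) (hXmeas : ∀ j, Measurable (X j))
    (hindep : iIndepFun X μ)
    (hXdist : ∀ j m, μ {ω | X j ω = m} =
      ENNReal.ofReal (Real.exp (-(l (j.1 + 1))) * (l (j.1 + 1)) ^ m / m.factorial))
    (k : ℕ) :
    bellPartial n k (fun j => (j.factorial : ℝ) * l j) =
      (n.factorial : ℝ) *
        (μ {ω | (∑ j : Fin n, X j ω) = k ∧ (∑ j : Fin n, (j.1 + 1) * X j ω) = n}).toReal /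
        (μ {ω | (∑ j : Fin n, X j ω) = 0}).toReal := by
  set Y : Ω → Fin n → ℕ := fun ω j => X j ω
  have hY : Measurable Y := measurable_pi_lambda _ hXmeas
  have hatom : ∀ c, (μ (Y ⁻¹' {c})).toReal =
      ∏ j : Fin n, rexp (-l (j.1 + 1)) * l (j.1 + 1) ^ c j / (c j).factorial := by
    intro c
    have hfiber : Y ⁻¹' {c} = {ω | ∀ j, X j ω = c j} := by ext; simp [Y, funext_iff]
    rw [hfiber, hindep.measure_forall_eq, ENNReal.toReal_prod]
    refine Finset.prod_congr rfl fun j _ => ?_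
    rw [hXdist, ENNReal.toReal_ofReal (by have := hl (j.1 + 1); positivity)]
  have hevent : {ω | (∑ j : Fin n, X j ω) = k ∧ (∑ j : Fin n, (j.1 + 1) * X j ω) = n} =
      Y ⁻¹' bellIndex n k := by
    ext; simp [Y, mem_bellIndex]
  have hzero : {ω | (∑ j : Fin n, X j ω) = 0} = Y ⁻¹' {0} := by
    ext; simp [Y, funext_iff]
  rw [hevent, hzero, hatom,
    ← sum_measure_preimage_singleton _ fun c _ => hY (measurableSet_singleton c),
    ENNReal.toReal_sum fun c _ => measure_ne_top μ _]
  simp only [hatom, prod_exp_neg_mul_pow_div_factorial, ← Finset.mul_sum, Pi.zero_apply, pow_zero,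
    Nat.factorial_zero, Nat.cast_one, div_one, mul_one]
  rw [bellPartial_factorial_mul, mul_div_assoc, mul_div_cancel_left₀ _ (by positivity)]

/-- probabilistic formula for partial exponential Bell polynomials:
`B_{n,k}(1!λ_1,…,n!λ_n) = n! P(S_n = k, W_n = n) / P(S_n = 0)` for independent
`X_j ~ Poisson(λ_j)`, `S_n = ∑ X_j`, `W_n = ∑ j X_j`. -/
theorem bellPartial_eq_poisson_prob
    {Ω : Type*} [MeasurableSpace Ω] (μ : Measure Ω) [IsProbabilityMeasure μ]
    (n : ℕ) (l : ℕ → ℝ) (hl : ∀ j, 0 < l j)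
    (X : Fin n → Ω → ℕ) (hXmeas : ∀ j, Measurable (X j))
    (hindep : iIndepFun X μ)
    (hXdist : ∀ j m, μ {ω | X j ω = m} =
      ENNReal.ofReal (Real.exp (-(l (j.1 + 1))) * (l (j.1 + 1)) ^ m / m.factorial))
    (k : ℕ) (hk1 : 1 ≤ k) (hkn : k ≤ n) :
    bellPartial n k (fun j => (j.factorial : ℝ) * l j) =
      (n.factorial : ℝ) *
        (μ {ω | (∑ j : Fin n, X j ω) = k ∧ (∑ j : Fin n, (j.1 + 1) * X j ω) = n}).toReal /
        (μ {ω | (∑ j : Fin n, X j ω) = 0}).toReal :=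
  bellPartial_eq_poisson_prob_general μ n l hl X hXmeas hindep hXdist k
end

section
/- For real $\alpha, \beta > 0$ and $n \ge 0$, the $n$-th derivative of the two-parameter Mittag-Leffler function satisfies $M_{\alpha,\beta}^{(n)}(x) = n!\, M^{n+1}_{\alpha, n\alpha+\beta}(x)$, where $M^\gamma_{\alpha,\beta}(z) = \frac{1}{\Gamma(\gamma)}\sum_{k=0}^\infty \frac{\Gamma(\gamma+k)}{k!\Gamma(\alpha k + \beta)} z^k$ is the three-parameter (Prabhakar) Mittag-Leffler function. -/
/-!
`M_{α,β}` is the power series with coefficients `1 / Γ(αk + β)`. Log-convexity of `Γ` gives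
`Γ(t + α) ≥ (t - 1)^α Γ(t)`, so by the ratio test the series is entire. An entire power series can
be differentiated termwise, and `n` differentiations turn the coefficient of `x^k` into
`(k + 1)⋯(k + n) c_{k+n} = Γ(n + 1 + k) / k! · c_{k+n}`, which is the coefficient of
`n! M^{n+1}_{α,nα+β}`.
-/

/-- The two-parameter Mittag-Leffler function `M_{α,β}(x) = ∑ x^k / Γ(αk+β)`. -/
noncomputable def mittagLeffler2 (α β x : ℝ) : ℝ :=
  ∑' k : ℕ, x ^ k / Real.Gamma (α * k + β)

/-- The three-parameter (Prabhakar) Mittag-Leffler function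
`M^γ_{α,β}(x) = (1/Γ(γ)) ∑ Γ(γ+k)/(k! Γ(αk+β)) x^k`. -/
noncomputable def mittagLeffler3 (α β γ x : ℝ) : ℝ :=
  (1 / Real.Gamma γ) *
    ∑' k : ℕ, Real.Gamma (γ + k) / (k.factorial * Real.Gamma (α * k + β)) * x ^ k

open Real Filter Topology NNReal FormalMultilinearSeries

section EntireSeries

variable {𝕜 : Type*} [RCLike 𝕜] {c : ℕ → 𝕜}

theorem summable_norm_mul_pow_of_radius_eq_top (hc : (ofScalars 𝕜 c).radius = ⊤) (r : ℝ≥0) :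
    Summable fun k => ‖c k‖ * (r : ℝ) ^ k := by
  simpa only [ofScalars_norm] using (ofScalars 𝕜 c).summable_norm_mul_pow (hc ▸ ENNReal.coe_lt_top)

theorem summable_mul_pow_of_radius_eq_top (hc : (ofScalars 𝕜 c).radius = ⊤) (x : 𝕜) :
    Summable fun k => c k * x ^ k :=
  .of_norm <| by simpa [norm_mul, norm_pow] using summable_norm_mul_pow_of_radius_eq_top hc ‖x‖₊

theorem ofScalars_radius_succ_mul_succ_eq_top (hc : (ofScalars 𝕜 c).radius = ⊤) :
    (ofScalars 𝕜 fun k : ℕ => ((k : 𝕜) + 1) * c (k + 1)).radius = ⊤ := by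
  refine radius_eq_top_of_summable_norm _ fun r => ?_
  have hR := (_root_.summable_nat_add_iff 1).2
    (summable_norm_mul_pow_of_radius_eq_top hc (2 * r + 1))
  refine hR.of_nonneg_of_le (fun _ => by positivity) fun k => ?_
  have hk : (k + 1 : ℝ) ≤ 2 ^ k := by exact_mod_cast Nat.lt_two_pow_self
  calc ‖ofScalars 𝕜 (fun k : ℕ => ((k : 𝕜) + 1) * c (k + 1)) k‖ * (r : ℝ) ^ k
      = ‖c (k + 1)‖ * ((k + 1) * (r : ℝ) ^ k) := by
        rw [ofScalars_norm, norm_mul, ← Nat.cast_succ, RCLike.norm_natCast]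
        push_cast
        ring
    _ ≤ ‖c (k + 1)‖ * ((2 * r + 1 : ℝ≥0) : ℝ) ^ (k + 1) := by
        gcongr
        push_cast
        calc (k + 1 : ℝ) * r ^ k ≤ 2 ^ k * r ^ k := by gcongr
          _ = (2 * r) ^ k := (mul_pow _ _ _).symm
          _ ≤ (2 * r + 1) ^ k := by gcongr; linarith
          _ ≤ (2 * r + 1) ^ (k + 1) := pow_le_pow_right₀ (by linarith [r.2]) k.le_succ

theorem hasDerivAt_tsum_mul_pow (hc : (ofScalars 𝕜 c).radius = ⊤) (x : 𝕜) :
    HasDerivAt (fun y => ∑' k, c k * y ^ k) (∑' k : ℕ, ((k : 𝕜) + 1) * c (k + 1) * x ^ k) x := by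
  set R : ℝ≥0 := ‖x‖₊ + 1
  have hxR : x ∈ Metric.ball (0 : 𝕜) R := by simp [R]
  have hderiv (k : ℕ) (y : 𝕜) : HasDerivAt (fun y => c k * y ^ k) (c k * (k * y ^ (k - 1))) y :=
    (hasDerivAt_pow k y).const_mul _
  have hbound (k : ℕ) (y : 𝕜) (hy : y ∈ Metric.ball (0 : 𝕜) R) :
      ‖c k * (k * y ^ (k - 1))‖ ≤ ‖c k‖ * (k * (R : ℝ) ^ (k - 1)) := by
    rw [mem_ball_zero_iff] at hy
    rw [norm_mul, norm_mul, norm_pow, RCLike.norm_natCast]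
    gcongr
  have hu : Summable fun k => ‖c k‖ * (k * (R : ℝ) ^ (k - 1)) := by
    refine (_root_.summable_nat_add_iff 1).1 <|
      (summable_norm_mul_pow_of_radius_eq_top (ofScalars_radius_succ_mul_succ_eq_top hc) R).congr
        fun k => ?_
    rw [norm_mul, ← Nat.cast_succ, RCLike.norm_natCast, Nat.add_sub_cancel]
    push_cast
    ring
  have hsum := hasDerivAt_tsum_of_isPreconnected hu Metric.isOpen_ball
    (convex_ball (0 : 𝕜) R).isPreconnected (fun k y _ => hderiv k y) hbound hxR
    (summable_mul_pow_of_radius_eq_top hc x) hxR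
  have hsummable : Summable fun k => c k * (k * x ^ (k - 1)) :=
    .of_norm_bounded hu fun k => hbound k x hxR
  refine hsum.congr_deriv ?_
  rw [hsummable.tsum_eq_zero_add]
  simp only [Nat.cast_add, Nat.cast_one, Nat.add_sub_cancel, CharP.cast_eq_zero, zero_mul,
    mul_zero, zero_add]
  exact tsum_congr fun k => by ring

theorem iteratedDeriv_tsum_mul_pow (hc : (ofScalars 𝕜 c).radius = ⊤) (n : ℕ) :
    iteratedDeriv n (fun y => ∑' k, c k * y ^ k) =
      fun y => ∑' k : ℕ, ((k + 1).ascFactorial n : 𝕜) * c (k + n) * y ^ k := by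
  induction n generalizing c with
  | zero => simp
  | succ n ih =>
    rw [iteratedDeriv_succ', funext fun x => (hasDerivAt_tsum_mul_pow hc x).deriv,
      ih (ofScalars_radius_succ_mul_succ_eq_top hc)]
    funext y
    refine tsum_congr fun k => ?_
    rw [Nat.ascFactorial_succ, ← add_assoc]
    push_cast
    ring

end EntireSeries

theorem Real.Gamma_mul_rpow_le_Gamma_add {t a : ℝ} (ht : 1 < t) (ha : 0 < a) :
    Gamma t * (t - 1) ^ a ≤ Gamma (t + a) := by
  have ht₀ : 0 < t - 1 := by linarith
  have hslope := convexOn_log_Gamma.slope_mono_adjacent (x := t - 1) (y := t) (z := t + a)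
    ht₀ (Set.mem_Ioi.2 (by linarith)) (by linarith) (by linarith)
  have hstep : log (Gamma t) - log (Gamma (t - 1)) = log (t - 1) := by
    rw [← sub_add_cancel t 1, Gamma_add_one ht₀.ne', add_sub_cancel_right,
      log_mul ht₀.ne' (Gamma_pos_of_pos ht₀).ne']
    ring
  simp only [Function.comp_apply, hstep, sub_sub_cancel, div_one, add_sub_cancel_left,
    le_div_iff₀ ha] at hslope
  rw [← log_le_log_iff (by positivity) (Gamma_pos_of_pos (by linarith)),
    log_mul (Gamma_pos_of_pos (by linarith)).ne' (rpow_pos_of_pos ht₀ a).ne', log_rpow ht₀]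
  linarith

theorem Real.tendsto_Gamma_div_Gamma_add_atTop {a : ℝ} (ha : 0 < a) :
    Tendsto (fun t => Gamma t / Gamma (t + a)) atTop (𝓝 0) := by
  have hbound : ∀ᶠ t in atTop, Gamma t / Gamma (t + a) ≤ (t + -1) ^ (-a) := by
    filter_upwards [eventually_gt_atTop 1] with t ht
    have ht₀ : 0 < t + -1 := by linarith
    rw [div_le_iff₀ (Gamma_pos_of_pos (by linarith)), rpow_neg ht₀.le, inv_mul_eq_div,
      le_div_iff₀ (by positivity)]
    exact Gamma_mul_rpow_le_Gamma_add ht ha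
  refine tendsto_of_tendsto_of_tendsto_of_le_of_le' tendsto_const_nhds
    ((tendsto_rpow_neg_atTop ha).comp (tendsto_atTop_add_const_right _ (-1) tendsto_id)) ?_ hbound
  filter_upwards [eventually_gt_atTop 0] with t ht
  exact div_nonneg (Gamma_pos_of_pos ht).le (Gamma_pos_of_pos (by linarith)).le

theorem ofScalars_radius_inv_Gamma_eq_top {α : ℝ} (hα : 0 < α) (β : ℝ) :
    (ofScalars ℝ fun k : ℕ => (Gamma (α * k + β))⁻¹).radius = ⊤ := by
  have hlin : Tendsto (fun k : ℕ => α * k + β) atTop atTop :=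
    tendsto_atTop_add_const_right _ β (tendsto_natCast_atTop_atTop.const_mul_atTop hα)
  have hpos := hlin.eventually_gt_atTop 0
  refine ofScalars_radius_eq_top_of_tendsto ℝ _ ?_ ?_
  · filter_upwards [hpos] with k hk
    exact inv_ne_zero (Gamma_pos_of_pos hk).ne'
  · refine ((tendsto_Gamma_div_Gamma_add_atTop hα).comp hlin).congr' ?_
    filter_upwards [hpos] with k hk
    have hk' : α * (k + 1 : ℕ) + β = α * k + β + α := by push_cast; ring
    rw [Function.comp_apply, hk', norm_inv, norm_inv, inv_div_inv, Real.norm_of_nonneg,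
      Real.norm_of_nonneg] <;> exact (Gamma_pos_of_pos (by linarith)).le

theorem Nat.cast_ascFactorial_eq_Gamma_div (n k : ℕ) :
    ((k + 1).ascFactorial n : ℝ) = Gamma (n + 1 + k) / k.factorial := by
  rw [show (n + 1 + k : ℝ) = (n + k : ℕ) + 1 by push_cast; ring, Gamma_nat_eq_factorial,
    add_comm n k, ← Nat.factorial_mul_ascFactorial k n]
  push_cast
  field_simp

theorem mittagLeffler2_iteratedDeriv_general (α β : ℝ) (hα : 0 < α) (n : ℕ)
    (x : ℝ) :
    iteratedDeriv n (mittagLeffler2 α β) x =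
      (n.factorial : ℝ) * mittagLeffler3 α (n * α + β) (n + 1) x := by
  have hseries : mittagLeffler2 α β = fun y => ∑' k : ℕ, (Gamma (α * k + β))⁻¹ * y ^ k := by
    funext y
    simp only [mittagLeffler2, div_eq_inv_mul]
  rw [hseries, iteratedDeriv_tsum_mul_pow (ofScalars_radius_inv_Gamma_eq_top hα β), mittagLeffler3,
    Gamma_nat_eq_factorial, ← mul_assoc, mul_one_div_cancel (by positivity), one_mul]
  refine tsum_congr fun k => ?_
  rw [Nat.cast_ascFactorial_eq_Gamma_div, show α * (k + n : ℕ) + β = α * k + (n * α + β) by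
    push_cast; ring]
  field_simp

/-- for `α, β > 0` and `n ≥ 0`,
`M_{α,β}^{(n)}(x) = n! M^{n+1}_{α, nα+β}(x)`. -/
theorem mittagLeffler2_iteratedDeriv (α β : ℝ) (hα : 0 < α) (hβ : 0 < β) (n : ℕ)
    (x : ℝ) :
    iteratedDeriv n (mittagLeffler2 α β) x =
      (n.factorial : ℝ) * mittagLeffler3 α (n * α + β) (n + 1) x :=
  mittagLeffler2_iteratedDeriv_general α β hα n x
end

section
/- Let $\beta \in (0,1)$ and $Q(\beta) = \frac{1}{\beta}\Big(\frac{1}{\Gamma(2\beta)} - \frac{1}{\beta \Gamma(\beta)^2}\Big)$. Then $Q(\beta) > 0$. Consequently, the time-fractional compound Poisson process with positive-integer jumps $Y_j$ (with $P(Y_1=j)=\lambda_j/\delta$, some $\lambda_j>0$ for $j\ge 2$) is over-dispersed: $\mathrm{Var}(H_\beta(t)) - E(H_\beta(t)) = \frac{q t^\beta}{\delta}\sum_{j\ge 1} j(j-1)\lambda_j + E(Y_1)^2 \delta^2 t^{2\beta} Q(\beta) > 0$ for $t > 0$. -/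
open MeasureTheory ProbabilityTheory Real

/-- `Q(β) = (1/β)(1/Γ(2β) - 1/(β Γ(β)²))`. -/
noncomputable def Qfun (β : ℝ) : ℝ :=
  (1 / β) * (1 / Real.Gamma (2 * β) - 1 / (β * Real.Gamma β ^ 2))

lemma gamma_sq_eq_beta {β : ℝ} (hβ0 : 0 < β) :
    Real.Gamma β ^ 2 =
      Real.Gamma (2 * β) * ∫ x in (0:ℝ)..1, x ^ (β - 1) * (1 - x) ^ (β - 1) := by
  have hre : 0 < Complex.re (β : ℂ) := by simpa using hβ0
  have hc := Complex.Gamma_mul_Gamma_eq_betaIntegral hre hre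
  have hbeta : Complex.betaIntegral (β : ℂ) (β : ℂ) =
      ((∫ x in (0:ℝ)..1, x ^ (β - 1) * (1 - x) ^ (β - 1) : ℝ) : ℂ) := by
    rw [Complex.betaIntegral, ← intervalIntegral.integral_ofReal]
    apply intervalIntegral.integral_congr
    intro x hx
    dsimp only
    rw [Set.uIcc_of_le (by norm_num : (0:ℝ) ≤ 1)] at hx
    obtain ⟨hx0, hx1⟩ := hx
    have h1 : ((β : ℂ) - 1) = ((β - 1 : ℝ) : ℂ) := by push_cast; ring
    rw [h1, ← Complex.ofReal_cpow hx0, Complex.ofReal_mul]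
    congr 1
    rw [show (1 : ℂ) - (x : ℂ) = ((1 - x : ℝ) : ℂ) by push_cast; ring,
      ← Complex.ofReal_cpow (by linarith)]
  have h2 : ((β : ℂ) + β) = ((2 * β : ℝ) : ℂ) := by push_cast; ring
  rw [h2, hbeta, Complex.Gamma_ofReal, Complex.Gamma_ofReal] at hc
  rw [pow_two]
  exact_mod_cast hc

lemma beta_integrand_integrable {β : ℝ} (hβ0 : 0 < β) :
    IntervalIntegrable (fun x : ℝ => x ^ (β - 1) * (1 - x) ^ (β - 1)) volume 0 1 := by
  have hre : 0 < Complex.re (β : ℂ) := by simpa using hβ0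
  have h := Complex.betaIntegral_convergent hre hre
  rw [intervalIntegrable_iff] at h ⊢
  have h01 : Set.uIoc (0:ℝ) 1 = Set.Ioc 0 1 := by
    rw [Set.uIoc_of_le]; norm_num
  rw [h01] at h ⊢
  refine MeasureTheory.IntegrableOn.congr_fun h.re ?_ measurableSet_Ioc
  intro x hx
  obtain ⟨hx0, hx1⟩ := hx
  have h1 : ((β : ℂ) - 1) = ((β - 1 : ℝ) : ℂ) := by push_cast; ring
  simp only [h1, ← Complex.ofReal_cpow hx0.le,
    show (1 : ℂ) - (x : ℂ) = ((1 - x : ℝ) : ℂ) by push_cast; ring,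
    ← Complex.ofReal_cpow (by linarith : (0:ℝ) ≤ 1 - x), ← Complex.ofReal_mul,
    Complex.ofReal_re, RCLike.re_to_complex]

lemma one_div_lt_beta {β : ℝ} (hβ0 : 0 < β) (hβ1 : β < 1) :
    1 / β < ∫ x in (0:ℝ)..1, x ^ (β - 1) * (1 - x) ^ (β - 1) := by
  have hf : IntervalIntegrable (fun x : ℝ => x ^ (β - 1)) volume 0 1 :=
    intervalIntegral.intervalIntegrable_rpow' (by linarith)
  have hg := beta_integrand_integrable hβ0
  have h1 : (∫ x in (0:ℝ)..1, x ^ (β - 1)) = 1 / β := by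
    rw [integral_rpow (Or.inl (by linarith))]
    rw [Real.one_rpow, Real.zero_rpow (by linarith : β - 1 + 1 ≠ 0)]
    ring_nf
  have hle : ∀ x ∈ Set.Ioo (0:ℝ) 1,
      x ^ (β - 1) < x ^ (β - 1) * (1 - x) ^ (β - 1) := by
    intro x hx
    have hxpos : (0:ℝ) < x ^ (β - 1) := Real.rpow_pos_of_pos hx.1 _
    have h2 : (1:ℝ) < (1 - x) ^ (β - 1) := by
      have := Real.rpow_lt_rpow_of_exponent_gt (x := 1 - x) (y := (0:ℝ)) (z := β - 1)
        (by linarith [hx.1, hx.2]) (by linarith [hx.1, hx.2]) (by linarith)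
      rwa [Real.rpow_zero] at this

    exact lt_mul_of_one_lt_right hxpos h2
  have hone : ∀ᵐ x : ℝ ∂volume, x ≠ 1 := by
    rw [ae_iff]
    have : {x : ℝ | ¬x ≠ 1} = {1} := by ext x; simp
    rw [this]
    exact Real.volume_singleton
  have haele : (fun x : ℝ => x ^ (β - 1)) ≤ᵐ[volume.restrict (Set.Ioc 0 1)]
      fun x => x ^ (β - 1) * (1 - x) ^ (β - 1) := by
    filter_upwards [ae_restrict_mem measurableSet_Ioc, ae_restrict_of_ae hone]
      with x hx hne
    exact (hle x ⟨hx.1, lt_of_le_of_ne hx.2 hne⟩).le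
  have hlt : volume.restrict (Set.Ioc (0:ℝ) 1)
      {x | x ^ (β - 1) < x ^ (β - 1) * (1 - x) ^ (β - 1)} ≠ 0 := by
    rw [Measure.restrict_apply' measurableSet_Ioc]
    intro h0
    have hsub : Set.Ioo (0:ℝ) 1 ⊆
        {x | x ^ (β - 1) < x ^ (β - 1) * (1 - x) ^ (β - 1)} ∩ Set.Ioc 0 1 := by
      intro x hx
      exact ⟨hle x hx, hx.1, hx.2.le⟩
    have := measure_mono_null hsub h0
    rw [Real.volume_Ioo] at this
    norm_num at this
  calc 1 / β = ∫ x in (0:ℝ)..1, x ^ (β - 1) := h1.symm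
    _ < _ := intervalIntegral.integral_lt_integral_of_ae_le_of_measure_setOf_lt_ne_zero
        (by norm_num) hf hg haele hlt

lemma gamma_two_mul_lt {β : ℝ} (hβ0 : 0 < β) (hβ1 : β < 1) :
    Real.Gamma (2 * β) < β * Real.Gamma β ^ 2 := by
  have h1 := gamma_sq_eq_beta hβ0
  have h2 := one_div_lt_beta hβ0 hβ1
  have h3 : 0 < Real.Gamma (2 * β) := Real.Gamma_pos_of_pos (by linarith)
  calc Real.Gamma (2 * β) = β * (Real.Gamma (2 * β) * (1 / β)) := by
        field_simp
    _ < β * (Real.Gamma (2 * β) *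
          ∫ x in (0:ℝ)..1, x ^ (β - 1) * (1 - x) ^ (β - 1)) := by
        exact mul_lt_mul_of_pos_left (mul_lt_mul_of_pos_left h2 h3) hβ0
    _ = β * Real.Gamma β ^ 2 := by rw [← h1]

lemma Qfun_pos_of_mem {β : ℝ} (hβ0 : 0 < β) (hβ1 : β < 1) : 0 < Qfun β := by
  have h3 : 0 < Real.Gamma (2 * β) := Real.Gamma_pos_of_pos (by linarith)
  have h4 : 0 < β * Real.Gamma β ^ 2 :=
    mul_pos hβ0 (pow_pos (Real.Gamma_pos_of_pos hβ0) 2)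
  have h5 := gamma_two_mul_lt hβ0 hβ1
  have h6 : 1 / (β * Real.Gamma β ^ 2) < 1 / Real.Gamma (2 * β) :=
    one_div_lt_one_div_of_lt h3 h5
  have h7 : 0 < 1 / Real.Gamma (2 * β) - 1 / (β * Real.Gamma β ^ 2) := by linarith
  exact mul_pos (by positivity) h7

/-- for `β ∈ (0,1)` one has `Q(β) > 0` (equivalently
`β Γ(β)² > Γ(2β)`); consequently the time-fractional compound Poisson process,
with jump law `P(Y_1 = j) = λ_j/δ` where `λ_j > 0` for some `j ≥ 2`, is
over-dispersed:
`Var H_β(t) - E H_β(t) = (q t^β/δ) ∑ j(j-1)λ_j + E(Y_1)² δ² t^{2β} Q(β) > 0`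
for `t > 0`. -/
theorem Qfun_pos_and_tfcpp_overdispersion
    (β : ℝ) (hβ : β ∈ Set.Ioo (0 : ℝ) 1) (t : ℝ) (ht : 0 < t)
    (l : ℕ → ℝ) (hl : ∀ j, 0 ≤ l j) (δ : ℝ) (hδ : HasSum (fun j => l (j + 1)) δ)
    (hδpos : 0 < δ) (hsum2 : Summable (fun j : ℕ => (j : ℝ) ^ 2 * l j))
    (hj2 : ∃ j : ℕ, 2 ≤ j ∧ 0 < l j)
    (q : ℝ) (hq : q = δ / Real.Gamma (1 + β))
    -- first and second moments of the jump distribution `P(Y_1 = j) = λ_j/δ`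
    (mY mY2 : ℝ)
    (hmY : mY = (∑' j : ℕ, (j : ℝ) * l j) / δ)
    (hmY2 : mY2 = (∑' j : ℕ, (j : ℝ) ^ 2 * l j) / δ)
    -- mean and variance of the TFCPP `H_β(t)`
    (meanH varH : ℝ)
    (hmeanH : meanH = q * t ^ β * mY)
    (hvarH : varH = mY2 * (q * t ^ β) + mY ^ 2 * δ ^ 2 * t ^ (2 * β) * Qfun β) :
    0 < Qfun β
    ∧ varH - meanH =
        (q * t ^ β / δ) * (∑' j : ℕ, (j : ℝ) * ((j : ℝ) - 1) * l j) +
          mY ^ 2 * δ ^ 2 * t ^ (2 * β) * Qfun β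
    ∧ 0 < varH - meanH := by
  obtain ⟨hβ0, hβ1⟩ := hβ
  have hQ : 0 < Qfun β := Qfun_pos_of_mem hβ0 hβ1
  -- summability of `j * l j`
  have hsum1 : Summable (fun j : ℕ => (j : ℝ) * l j) := by
    refine Summable.of_nonneg_of_le
      (fun j => mul_nonneg (Nat.cast_nonneg j) (hl j)) (fun j => ?_) hsum2
    have hj : (j : ℝ) ≤ (j : ℝ) ^ 2 := by
      rcases Nat.eq_zero_or_pos j with h | h
      · simp [h]
      · have h1 : (1 : ℝ) ≤ (j : ℝ) := by exact_mod_cast h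
        nlinarith
    exact mul_le_mul_of_nonneg_right hj (hl j)
  have hdiff : Summable (fun j : ℕ => (j : ℝ) * ((j : ℝ) - 1) * l j) :=
    (hsum2.sub hsum1).congr (fun j => by ring)
  have htsum : (∑' j : ℕ, (j : ℝ) * ((j : ℝ) - 1) * l j)
      = (∑' j : ℕ, (j : ℝ) ^ 2 * l j) - ∑' j : ℕ, (j : ℝ) * l j := by
    rw [← Summable.tsum_sub hsum2 hsum1]
    exact tsum_congr fun j => by ring
  have heq : varH - meanH =
      (q * t ^ β / δ) * (∑' j : ℕ, (j : ℝ) * ((j : ℝ) - 1) * l j) +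
        mY ^ 2 * δ ^ 2 * t ^ (2 * β) * Qfun β := by
    rw [hvarH, hmeanH, hmY2, hmY, htsum]
    field_simp
    ring
  refine ⟨hQ, heq, ?_⟩
  have hqpos : 0 < q := by
    rw [hq]
    exact div_pos hδpos (Real.Gamma_pos_of_pos (by linarith))
  have hrp : 0 < t ^ β := Real.rpow_pos_of_pos ht _
  have hrp2 : 0 < t ^ (2 * β) := Real.rpow_pos_of_pos ht _
  have hterm : ∀ j : ℕ, 0 ≤ (j : ℝ) * ((j : ℝ) - 1) * l j := by
    intro j
    rcases Nat.eq_zero_or_pos j with h | h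
    · simp [h]
    · have h1 : (1 : ℝ) ≤ (j : ℝ) := by exact_mod_cast h
      exact mul_nonneg (mul_nonneg (by linarith) (by linarith)) (hl j)
  obtain ⟨j, hj2', hjpos⟩ := hj2
  have hjr : (2 : ℝ) ≤ (j : ℝ) := by exact_mod_cast hj2'
  have hterm_pos : 0 < (j : ℝ) * ((j : ℝ) - 1) * l j :=
    mul_pos (mul_pos (by linarith) (by linarith)) hjpos
  have htsum_pos : 0 < ∑' j : ℕ, (j : ℝ) * ((j : ℝ) - 1) * l j :=
    Summable.tsum_pos hdiff hterm j hterm_pos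
  have h1st : 0 < (q * t ^ β / δ) * (∑' j : ℕ, (j : ℝ) * ((j : ℝ) - 1) * l j) :=
    mul_pos (div_pos (mul_pos hqpos hrp) hδpos) htsum_pos
  have h2nd : 0 ≤ mY ^ 2 * δ ^ 2 * t ^ (2 * β) * Qfun β :=
    mul_nonneg (mul_nonneg (mul_nonneg (sq_nonneg _) (sq_nonneg _)) hrp2.le) hQ.le
  rw [heq]
  linarith
end
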